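/- Let K_t^t (t ≥ 2, n = 2t) be the graph obtained from K_t by attaching a pendant edge at every vertex. Its distance characteristic polynomial is (λ+2-√2)^{t-1} (λ+2+√2)^{t-1} [λ^2 + (4-4t)λ + 2-2t-t^2]. -/
import Mathlib


noncomputable def sortedEigenvalues {ι : Type*} [Fintype ι] [DecidableEq ι]
    (A : Matrix ι ι ℝ) (hA : A.IsHermitian) : List ℝ :=
  (Finset.univ.val.map hA.eigenvalues).sort (· ≤ ·)

/-- `eig A hA k` is the `k`-th largest eigenvalue of `A` (1-indexed). -/
noncomputable def eig {ι : Type*} [Fintype ι] [DecidableEq ι]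
    (A : Matrix ι ι ℝ) (hA : A.IsHermitian) (k : ℕ) : ℝ :=
  (sortedEigenvalues A hA)[Fintype.card ι - k]!
open Polynomial Matrix

def Jmat (K : Type*) [Field K] (n : ℕ) : Matrix (Fin n) (Fin n) K := Matrix.of fun _ _ => 1

noncomputable def Mab (K : Type*) [Field K] (n : ℕ) (a b : K) : Matrix (Fin n) (Fin n) K :=
  a • 1 + b • Jmat K n

variable {K : Type*} [Field K] {n : ℕ}

lemma Jmat_mul_Jmat : Jmat K n * Jmat K n = (n : K) • Jmat K n := by
  ext i j
  simp [Jmat, Matrix.mul_apply]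

lemma Mab_apply (a b : K) (i j : Fin n) :
    Mab K n a b i j = if i = j then a + b else b := by
  simp only [Mab, Jmat, Matrix.add_apply, Matrix.smul_apply, Matrix.one_apply, Matrix.of_apply,
    smul_eq_mul]
  split_ifs <;> ring

lemma Mab_mul (a b c d : K) :
    Mab K n a b * Mab K n c d = Mab K n (a * c) (a * d + b * c + n * (b * d)) := by
  simp only [Mab, Matrix.add_mul, Matrix.mul_add, Matrix.smul_mul, Matrix.mul_smul,
    Jmat_mul_Jmat, smul_smul, Matrix.mul_one, Matrix.one_mul]
  module

lemma Mab_sub (a b c d : K) :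
    Mab K n a b - Mab K n c d = Mab K n (a - c) (b - d) := by
  simp only [Mab]
  module

lemma Mab_det (hn : n ≠ 0) (a b : K) (ha : a ≠ 0) :
    (Mab K n a b).det = a ^ (n - 1) * (a + n * b) := by
  have h1 : Mab K n a b =
      a • ((1 : Matrix (Fin n) (Fin n) K)
        + Matrix.replicateCol Unit (fun _ : Fin n => a⁻¹ * b) * Matrix.replicateRow Unit (fun _ : Fin n => (1 : K))) := by
    ext i j
    simp only [Mab, Jmat, Matrix.add_apply, Matrix.smul_apply, Matrix.one_apply,
      Matrix.mul_apply, Matrix.replicateCol_apply, Matrix.replicateRow_apply, Matrix.of_apply,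
      Finset.univ_unique, Finset.sum_singleton, smul_eq_mul]
    split_ifs <;> field_simp
  rw [h1, Matrix.det_smul, Matrix.det_one_add_replicateCol_mul_replicateRow]
  obtain ⟨m, rfl⟩ : ∃ m, n = m + 1 := ⟨n - 1, by omega⟩
  simp only [dotProduct, Fintype.card_fin, one_mul, Finset.sum_const,
    Finset.card_univ, Fintype.card_fin, nsmul_eq_mul, Nat.add_sub_cancel]
  field_simp
  ring


/-- The distance matrix of the graph `K_s^t`, obtained from the complete graph `K_s`
by attaching a pendant vertex at each of `t` of its vertices (`t ≤ s`).
Clique vertices are `Sum.inl`, pendant vertices are `Sum.inr`; the `i`-th pendant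
vertex is attached to the `i`-th clique vertex. -/
def DKst (s t : ℕ) : Matrix (Fin s ⊕ Fin t) (Fin s ⊕ Fin t) ℝ :=
  fun x y =>
    match x, y with
    | .inl a, .inl b => if a = b then 0 else 1
    | .inl a, .inr b => if (a : ℕ) = (b : ℕ) then 1 else 2
    | .inr a, .inl b => if (a : ℕ) = (b : ℕ) then 1 else 2
    | .inr a, .inr b => if a = b then 0 else 3

noncomputable abbrev KK := FractionRing (Polynomial ℝ)
noncomputable abbrev phiK : ℝ[X] →+* KK := algebraMap ℝ[X] KK

lemma blocks_eq (t : ℕ) :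
    (charmatrix (DKst t t)).map phiK
      = Matrix.fromBlocks (Mab KK t (phiK X + 1) (-1)) (Mab KK t 1 (-2))
          (Mab KK t 1 (-2)) (Mab KK t (phiK X + 3) (-3)) := by
  have hcn : ∀ m : ℕ, phiK (C (m : ℝ)) = (m : KK) := fun m => by
    rw [map_natCast (C : ℝ →+* ℝ[X]), map_natCast]
  have hC2 : phiK (C (2 : ℝ)) = 2 := by
    rw [show ((2 : ℝ)) = ((2 : ℕ) : ℝ) by norm_num, hcn]; norm_num
  have hC3 : phiK (C (3 : ℝ)) = 3 := by
    rw [show ((3 : ℝ)) = ((3 : ℕ) : ℝ) by norm_num, hcn]; norm_num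
  ext i j
  rcases i with i | i <;> rcases j with j | j <;>
    by_cases h : i = j <;>
    simp only [Matrix.map_apply, charmatrix_apply, Matrix.diagonal_apply,
      Matrix.fromBlocks_apply₁₁, Matrix.fromBlocks_apply₁₂, Matrix.fromBlocks_apply₂₁,
      Matrix.fromBlocks_apply₂₂, Mab_apply, DKst, Sum.inl.injEq, Sum.inr.injEq,
      Fin.val_inj, reduceCtorEq, h] <;>
    simp [h, Fin.val_inj, hC2, hC3] <;>
    ring

set_option maxHeartbeats 1600000 in
open Polynomial in
theorem charpoly_Ktt {t : ℕ} (ht : 2 ≤ t) :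
    (DKst t t).charpoly
      = (X + C (2 - Real.sqrt 2)) ^ (t - 1) * (X + C (2 + Real.sqrt 2)) ^ (t - 1)
          * (X ^ 2 + C (4 - 4 * (t : ℝ)) * X + C (2 - 2 * (t : ℝ) - t ^ 2)) := by
  classical
  have ht0 : t ≠ 0 := by omega
  have hφ : Function.Injective phiK := IsFractionRing.injective _ _
  set x : KK := phiK X with hx
  have hcn : ∀ m : ℕ, phiK (C (m : ℝ)) = (m : KK) := fun m => by
    rw [map_natCast (C : ℝ →+* ℝ[X]), map_natCast]
  have hne : ∀ p : ℝ[X], Polynomial.eval 0 p ≠ 0 → phiK p ≠ 0 := by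
    intro p hp h
    exact hp (by rw [show p = 0 from hφ (by simpa using h)]; simp)
  have htR : (2 : ℝ) ≤ (t : ℝ) := by exact_mod_cast ht
  have hC2 : phiK (C (2 : ℝ)) = 2 := by
    rw [show ((2 : ℝ)) = ((2 : ℕ) : ℝ) by norm_num, hcn]; norm_num
  have hC3 : phiK (C (3 : ℝ)) = 3 := by
    rw [show ((3 : ℝ)) = ((3 : ℕ) : ℝ) by norm_num, hcn]; norm_num
  have hC4 : phiK (C (4 : ℝ)) = 4 := by
    rw [show ((4 : ℝ)) = ((4 : ℕ) : ℝ) by norm_num, hcn]; norm_num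
  have hx3 : x + 3 ≠ 0 := by
    have h : x + 3 = phiK (X + C 3) := by rw [map_add, hC3]
    rw [h]
    exact hne _ (by simp)
  have hx3t : (x + 3) + (t : KK) * (-3) ≠ 0 := by
    have h : (x + 3) + (t : KK) * (-3) = phiK (X + C (3 + (t : ℝ) * (-3))) := by
      rw [map_add, C_add, map_add, C_mul, C_neg, _root_.map_mul, map_neg, hC3, hcn, ← hx]
      ring
    rw [h]
    refine hne _ ?_
    simp only [eval_add, eval_X, eval_C]
    intro hcontra
    nlinarith
  have hq : x ^ 2 + 4 * x + 2 ≠ 0 := by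
    have h : x ^ 2 + 4 * x + 2 = phiK (X ^ 2 + C 4 * X + C 2) := by
      rw [map_add, map_add, map_pow, _root_.map_mul, hC4, hC2]
    rw [h]
    refine hne _ ?_
    simp only [eval_add, eval_pow, eval_X, eval_mul, eval_C]
    norm_num
  set A : Matrix (Fin t) (Fin t) KK := Mab KK t (x + 1) (-1) with hA
  set B : Matrix (Fin t) (Fin t) KK := Mab KK t 1 (-2) with hB
  set D : Matrix (Fin t) (Fin t) KK := Mab KK t (x + 3) (-3) with hD
  have hDdet : D.det = (x + 3) ^ (t - 1) * ((x + 3) + (t : KK) * (-3)) :=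
    Mab_det ht0 _ _ hx3
  have hDu : IsUnit D.det := by
    rw [hDdet]
    exact (isUnit_iff_ne_zero).2 (mul_ne_zero (pow_ne_zero _ hx3) hx3t)
  haveI : Invertible D := D.invertibleOfIsUnitDet hDu
  have hBD : Commute B D := by
    show B * D = D * B
    rw [hB, hD, Mab_mul, Mab_mul]
    congr 1 <;> ring
  have key : (Matrix.fromBlocks A B B D).det
      = (x ^ 2 + 4 * x + 2) ^ (t - 1)
        * ((x ^ 2 + 4 * x + 2) + (t : KK) * (-(4 * x) - 2 - (t : KK))) := by
    rw [Matrix.det_fromBlocks₂₂]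
    have hcancel : B * ⅟D * B * D = B * B := by
      calc B * ⅟D * B * D = B * ⅟D * (B * D) := by rw [Matrix.mul_assoc]
        _ = B * ⅟D * (D * B) := by rw [hBD.eq]
        _ = B * (⅟D * (D * B)) := by rw [Matrix.mul_assoc]
        _ = B * B := by rw [← Matrix.mul_assoc (⅟D), invOf_mul_self, Matrix.one_mul]
    have hdm : D.det * (A - B * ⅟D * B).det = ((A - B * ⅟D * B) * D).det := by
      rw [Matrix.det_mul, mul_comm]
    rw [hdm, Matrix.sub_mul, hcancel]
    have hAD : A * D - B * B = Mab KK t (x ^ 2 + 4 * x + 2) (-(4 * x) - 2 - (t : KK)) := by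
      rw [hA, hB, hD, Mab_mul, Mab_mul, Mab_sub]
      congr 1 <;> ring
    rw [hAD, Mab_det ht0 _ _ hq]
  apply hφ
  show phiK ((charmatrix (DKst t t)).det) = _
  rw [RingHom.map_det, RingHom.mapMatrix_apply, blocks_eq, ← hA, ← hB, ← hD, key]
  have hs : phiK (C (Real.sqrt 2)) * phiK (C (Real.sqrt 2)) = 2 := by
    rw [← _root_.map_mul, ← C_mul, Real.mul_self_sqrt (by norm_num : (0:ℝ) ≤ 2), hC2]
  simp only [_root_.map_mul, map_pow, map_add, map_sub, hC2, hC4, hcn, ← hx]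
  rw [← mul_pow]
  set s : KK := phiK (C (Real.sqrt 2)) with hsdef
  have hfac : (x + (2 - s)) * (x + (2 + s)) = x ^ 2 + 4 * x + 2 := by
    linear_combination -hs
  rw [hfac]
  congr 1
  ring
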